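/- arXiv:1704.02939 — 2 statements merged into one kernel-verified Lean document; each statement's English description precedes it below -/
import Mathlib

section
/- Suppose H and F are r-uniform hypergraphs. Then there is a homomorphism H → F if and only if there exists a function g : i(F) → i(H) such that the family {A_x : x ∈ V(F)}, where A_x = ⋂_{I ∈ i(F), x ∈ I} g(I), covers V(H). -/
open Set

universe u

variable {V : Type u}

/-- A set of vertices is independent if no two of its members are adjacent. -/
def IndepSet (G : SimpleGraph V) (I : Set V) : Prop :=
  I.Pairwise (fun u v => ¬ G.Adj u v)

/-- A maximal independent set of a graph. -/
def MaxIndep (G : SimpleGraph V) (I : Set V) : Prop :=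
  IndepSet G I ∧ ∀ J : Set V, IndepSet G J → I ⊆ J → J = I

/-- An induced matching with `k` edges `a i b i`: the `2k` endpoints are pairwise
distinct and the only edges of `G` between them are the matching edges themselves. -/
def IsInducedMatching (G : SimpleGraph V) (k : ℕ) (a b : Fin k → V) : Prop :=
  (∀ i, G.Adj (a i) (b i)) ∧
  ∀ i j, i ≠ j → ∀ x ∈ ({a i, b i} : Set V), ∀ y ∈ ({a j, b j} : Set V),
    x ≠ y ∧ ¬ G.Adj x y

/-- `μ_G(S)`: maximum size of an induced matching each of whose edges meets `S`. -/
noncomputable def muS (G : SimpleGraph V) (S : Set V) : ℕ :=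
  sSup {k | ∃ a b : Fin k → V, IsInducedMatching G k a b ∧ ∀ i, a i ∈ S ∨ b i ∈ S}

/-- `α_G(S)`: maximum size of an independent set contained in `S`. -/
noncomputable def alphaS (G : SimpleGraph V) (S : Set V) : ℕ :=
  sSup {n | ∃ I : Set V, I ⊆ S ∧ IndepSet G I ∧ I.ncard = n}

/-- The trace (restriction) of a set family on `S`. -/
def trace (S : Set V) (F : Set (Set V)) : Set (Set V) :=
  (fun I => I ∩ S) '' F

/-- A hypergraph (given by its edge set) is a clutter if no edge properly contains another. -/
def IsClutter (E : Set (Set V)) : Prop := ∀ h ∈ E, ∀ f ∈ E, f ⊆ h → f = h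

/-- A transversal of a hypergraph: a set meeting every edge. -/
def IsTransversal (E : Set (Set V)) (T : Set V) : Prop := ∀ h ∈ E, (T ∩ h).Nonempty

/-- The blocker: the clutter of all inclusion-wise minimal transversals. -/
def blocker (E : Set (Set V)) : Set (Set V) :=
  {T | IsTransversal E T ∧ ∀ T' ⊆ T, IsTransversal E T' → T' = T}

/-- Inclusion-wise minimal members of a family of sets. -/
def minEdges (F : Set (Set V)) : Set (Set V) := {h ∈ F | ∀ f ∈ F, f ⊆ h → f = h}

/-- Deletion of a vertex from a clutter. -/
def del (E : Set (Set V)) (v : V) : Set (Set V) := {h ∈ E | v ∉ h}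

/-- Contraction of a vertex in a clutter. -/
def contr (E : Set (Set V)) (v : V) : Set (Set V) :=
  minEdges ((fun h => h \ {v}) '' E)

/-- Contraction of a set of vertices in a clutter. -/
def contrSet (E : Set (Set V)) (B : Set V) : Set (Set V) :=
  minEdges ((fun h => h \ B) '' E)

/-- Join of two clutters: minimal elements of the union of the edge sets. -/
def cJoin (E F : Set (Set V)) : Set (Set V) := minEdges (E ∪ F)

/-- Meet of two clutters: minimal elements of pairwise unions of edges. -/
def cMeet (E F : Set (Set V)) : Set (Set V) :=
  minEdges {s | ∃ h ∈ E, ∃ f ∈ F, s = h ∪ f}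

/-- `H ∘ (h, u, v) = H[u; h∖{u}] ∨ H[v; h∖{v}]`. -/
def cOp (E : Set (Set V)) (h : Set V) (u v : V) : Set (Set V) :=
  cJoin (contrSet (del E u) (h \ {u})) (contrSet (del E v) (h \ {v}))

/-- An independent (stable) set of a hypergraph: contains no edge. -/
def HIndep (E : Set (Set V)) (I : Set V) : Prop := ∀ h ∈ E, ¬ h ⊆ I

/-- A maximal independent set of a hypergraph. -/
def MaxHIndep (E : Set (Set V)) (I : Set V) : Prop :=
  HIndep E I ∧ ∀ J : Set V, HIndep E J → I ⊆ J → J = I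

/-- The Gaifman graph of a hypergraph. -/
def gaif (E : Set (Set V)) : SimpleGraph V :=
  SimpleGraph.fromRel (fun u v => ∃ h ∈ E, u ∈ h ∧ v ∈ h)

/-- A well-behaved hypergraph width measure. -/
structure WellBehaved (lam : Set (Set V) → Set V → ℚ) : Prop where
  one : ∀ (E : Set (Set V)) (x : V), 1 ≤ lam E {x}
  subadd : ∀ (E : Set (Set V)) (S T : Set V), lam E (S ∪ T) ≤ lam E S + lam E T
  add : ∀ (E : Set (Set V)) (S T : Set V), Disjoint S T →
    (∀ s ∈ S, ∀ t ∈ T, ¬ (gaif E).Adj s t) → lam E (S ∪ T) = lam E S + lam E T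
  mono : ∀ (E F : Set (Set V)) (S T : Set V), E ⊆ F → S ⊆ T → lam F S ≤ lam E T

/-- `(T, bag)` is a tree decomposition of `G`. -/
structure IsTreeDecomp {ι : Type} (G : SimpleGraph V) (T : SimpleGraph ι)
    (bag : ι → Set V) : Prop where
  conn : T.Connected
  acyclic : T.IsAcyclic
  edge_cover : ∀ ⦃u v : V⦄, G.Adj u v → ∃ t, u ∈ bag t ∧ v ∈ bag t
  vert_conn : ∀ v : V, (T.induce {t | v ∈ bag t}).Connected

/-- The `λ`-treewidth of `G` for a width measure `lam` on bags. -/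
noncomputable def lamTW (G : SimpleGraph V) (lam : Set V → ℕ) : ℕ :=
  sInf {k | ∃ (ι : Type) (T : SimpleGraph ι) (bag : ι → Set V),
    IsTreeDecomp G T bag ∧ ∀ t, lam (bag t) ≤ k}

/-- `M(G)`: attach a pendant vertex to every vertex of `G`. -/
def pend (G : SimpleGraph V) : SimpleGraph (V ⊕ V) :=
  SimpleGraph.fromRel (fun x y =>
    match x, y with
    | Sum.inl u, Sum.inl v => G.Adj u v
    | Sum.inl u, Sum.inr v => u = v
    | _, _ => False)

/-- `L²(G)`: vertices are the edges of `G`; two distinct edges are adjacent iff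
their union induces a connected subgraph. -/
def L2 (G : SimpleGraph V) : SimpleGraph G.edgeSet :=
  SimpleGraph.fromRel (fun e f =>
    ∃ x ∈ (e : Sym2 V), ∃ y ∈ (f : Sym2 V), x = y ∨ G.Adj x y)

/-- The Gaifman graph with a set `S` of vertices removed (vertices of `S` become isolated). -/
def gaifMinus (E : Set (Set V)) (S : Set V) : SimpleGraph V :=
  SimpleGraph.fromRel (fun u v => (gaif E).Adj u v ∧ u ∉ S ∧ v ∉ S)

/-- `S` is an `(A, B)`-separator: `A ∩ B ⊆ S` and every walk from `A` to `B` meets `S`. -/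
def IsSeparator (G : SimpleGraph V) (A B S : Set V) : Prop :=
  A ∩ B ⊆ S ∧ ∀ a ∈ A, ∀ b ∈ B, ∀ p : G.Walk a b, ∃ x ∈ p.support, x ∈ S

/-- Minors of clutters: obtained by repeated deletions and contractions. -/
inductive IsMinor : Set (Set V) → Set (Set V) → Prop
  | refl (E : Set (Set V)) : IsMinor E E
  | delStep {F E : Set (Set V)} (v : V) : IsMinor F E → IsMinor (del F v) E
  | contrStep {F E : Set (Set V)} (v : V) : IsMinor F E → IsMinor (contr F v) E

/-!
A homomorphism `f : H → F` pulls maximal independent sets back to independent sets, and extending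
`f ⁻¹' I` to a maximal independent set `g I` of `H` gives an assignment whose set `A_{f v}` contains
`v`. Conversely, choosing for every `v` some `f v` with `v ∈ A_{f v}` defines a map which sends each
edge `h` of `H` onto an edge: otherwise `f '' h`, having at most `r` elements, would contain no edge
of the `r`-uniform `F`, so it would lie in a maximal independent set `J` of `F`, and then `h ⊆ g J`,
contradicting the independence of `g J`.
-/

section Homomorphism

variable {W : Type*}

theorem HIndep.exists_maxHIndep_superset [Finite V] {E : Set (Set V)} {I : Set V}
    (hI : HIndep E I) : ∃ J, MaxHIndep E J ∧ I ⊆ J := by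
  obtain ⟨J, ⟨hJ, hIJ⟩, hmax⟩ :=
    (toFinite {J | HIndep E J ∧ I ⊆ J}).exists_maximalFor id _ ⟨I, hI, subset_rfl⟩
  exact ⟨J, ⟨hJ, fun K hK hJK => (hmax ⟨hK, hIJ.trans hJK⟩ hJK).antisymm hJK⟩, hIJ⟩

theorem HIndep.preimage {E : Set (Set V)} {F : Set (Set W)} {f : V → W}
    (hf : ∀ h ∈ E, f '' h ∈ F) {I : Set W} (hI : HIndep F I) : HIndep E (f ⁻¹' I) :=
  fun h hh hhI => hI _ (hf h hh) (image_subset_iff.mpr hhI)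

theorem HIndep.of_ncard_le {F : Set (Set W)} {r : ℕ} (hF : ∀ e ∈ F, e.ncard = r) {s : Set W}
    (hs : s.Finite) (hsr : s.ncard ≤ r) (hsF : s ∉ F) : HIndep F s := fun e he hes =>
  hsF (eq_of_subset_of_ncard_le hes (by rw [hF e he]; exact hsr) hs ▸ he)

theorem iUnion_iInter_maxHIndep_eq_univ_iff {E : Set (Set W)} {g : Set W → Set V} :
    (⋃ x : W, ⋂ I ∈ {I : Set W | MaxHIndep E I ∧ x ∈ I}, g I) = univ ↔
      ∀ v, ∃ x, ∀ I, MaxHIndep E I → x ∈ I → v ∈ g I := by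
  simp only [eq_univ_iff_forall, mem_iUnion, mem_iInter, mem_ofPred_eq, and_imp]

theorem exists_maxHIndep_superset_preimage [Finite V] {E : Set (Set V)} {F : Set (Set W)}
    {f : V → W} (hf : ∀ h ∈ E, f '' h ∈ F) :
    ∃ g : Set W → Set V, ∀ I, MaxHIndep F I → MaxHIndep E (g I) ∧ f ⁻¹' I ⊆ g I := by
  classical
  choose g hg using fun I (hI : MaxHIndep F I) => (hI.1.preimage hf).exists_maxHIndep_superset
  exact ⟨fun I => if hI : MaxHIndep F I then g I hI else ∅, fun I hI => by
    simpa only [dif_pos hI] using hg I hI⟩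

theorem image_mem_of_maxHIndep_assignment [Finite V] [Finite W] {r : ℕ} {E : Set (Set V)}
    {F : Set (Set W)} (hE : ∀ h ∈ E, h.ncard = r) (hF : ∀ e ∈ F, e.ncard = r)
    {g : Set W → Set V} (hg : ∀ I, MaxHIndep F I → MaxHIndep E (g I)) {f : V → W}
    (hfg : ∀ v I, MaxHIndep F I → f v ∈ I → v ∈ g I) {h : Set V} (hh : h ∈ E) : f '' h ∈ F := by
  by_contra hhF
  have hind : HIndep F (f '' h) :=
    .of_ncard_le hF (toFinite _) ((ncard_image_le (toFinite h)).trans (hE h hh).le) hhF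
  obtain ⟨J, hJ, hhJ⟩ := hind.exists_maxHIndep_superset
  exact (hg J hJ).1 h hh fun v hv => hfg v J hJ (hhJ (mem_image_of_mem f hv))

end Homomorphism

/-- existence of a homomorphism between `r`-uniform hypergraphs is
equivalent to the existence of a covering assignment of maximal independent sets. -/
theorem stmt_9 {V W : Type} [Fintype V] [Fintype W] (r : ℕ)
    (EH : Set (Set V)) (EF : Set (Set W))
    (hH : ∀ h ∈ EH, h.ncard = r) (hF : ∀ h ∈ EF, h.ncard = r) :
    (∃ f : V → W, ∀ h ∈ EH, f '' h ∈ EF) ↔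
    (∃ g : Set W → Set V, (∀ I : Set W, MaxHIndep EF I → MaxHIndep EH (g I)) ∧
      (⋃ x : W, ⋂ I ∈ {I : Set W | MaxHIndep EF I ∧ x ∈ I}, g I) = Set.univ) := by
  simp only [iUnion_iInter_maxHIndep_eq_univ_iff]
  constructor
  · rintro ⟨f, hf⟩
    obtain ⟨g, hg⟩ := exists_maxHIndep_superset_preimage hf
    exact ⟨g, fun I hI => (hg I hI).1, fun v => ⟨f v, fun I hI hvI => (hg I hI).2 hvI⟩⟩
  · rintro ⟨g, hg, hcover⟩
    choose f hf using hcover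
    exact ⟨f, fun h hh => image_mem_of_maxHIndep_assignment hH hF hg hf hh⟩
end

section
/- For every graph G and every subset S ⊆ V(G), α_G(S) = μ_{M(G)}(S), where M(G) is obtained from G by attaching a pendant vertex v' to each vertex v of G and S is regarded as a subset of V(M(G)). -/
open Set

universe u

variable {V : Type u}

lemma pend_adj_inl_inl {V : Type u} (G : SimpleGraph V) (u v : V) :
    (pend G).Adj (Sum.inl u) (Sum.inl v) ↔ G.Adj u v := by
  constructor
  · rintro ⟨hne, h | h⟩
    · exact h
    · exact h.symm
  · intro h
    exact ⟨by simpa using h.ne, Or.inl h⟩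

lemma pend_adj_inl_inr {V : Type u} (G : SimpleGraph V) (u v : V) :
    (pend G).Adj (Sum.inl u) (Sum.inr v) ↔ u = v := by
  constructor
  · rintro ⟨hne, h | h⟩
    · exact h
    · exact h.elim
  · rintro rfl
    exact ⟨by simp, Or.inl rfl⟩

lemma pend_not_adj_inr_inr {V : Type u} (G : SimpleGraph V) (u v : V) :
    ¬ (pend G).Adj (Sum.inr u) (Sum.inr v) := by
  rintro ⟨hne, h | h⟩ <;> exact h

/-- `α_G(S) = μ_{M(G)}(S)`. -/
theorem stmt_13 {V : Type} [Fintype V] (G : SimpleGraph V) (S : Set V) :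
    alphaS G S = muS (pend G) (Sum.inl '' S) := by
  classical
  unfold alphaS muS
  congr 1
  ext n
  constructor
  · rintro ⟨I, hIS, hInd, hcard⟩
    have hIfin : I.Finite := Set.toFinite I
    have : Fintype I := hIfin.fintype
    have hcard' : Fintype.card I = n := by
      rw [← Nat.card_coe_set_eq, Nat.card_eq_fintype_card] at hcard
      exact hcard
    obtain ⟨e⟩ := Fintype.card_eq.mp (hcard'.trans (Fintype.card_fin n).symm)
    refine ⟨fun i => Sum.inl (e.symm i : V), fun i => Sum.inr (e.symm i : V), ⟨?_, ?_⟩, ?_⟩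
    · intro i
      exact (pend_adj_inl_inr G _ _).mpr rfl
    · intro i j hij x hx y hy
      have hne : (e.symm i : V) ≠ (e.symm j : V) := by
        intro h
        exact hij (by simpa using e.symm.injective (Subtype.ext h))
      rcases hx with rfl | hx <;> rcases hy with rfl | hy
      · exact ⟨by simpa using hne, fun hadj => by
          rcases (pend_adj_inl_inl G _ _).mp hadj with hadj'
          exact hInd (e.symm i).2 (e.symm j).2 hne hadj'⟩
      · rw [Set.mem_singleton_iff] at hy; subst hy
        exact ⟨by simp, fun hadj => hne ((pend_adj_inl_inr G _ _).mp hadj)⟩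
      · rw [Set.mem_singleton_iff] at hx; subst hx
        refine ⟨by simp, fun hadj => hne ?_⟩
        exact ((pend_adj_inl_inr G _ _).mp hadj.symm).symm
      · rw [Set.mem_singleton_iff] at hx hy; subst hx; subst hy
        exact ⟨by simpa using hne, pend_not_adj_inr_inr G _ _⟩
    · intro i
      exact Or.inl ⟨(e.symm i : V), hIS (e.symm i).2, rfl⟩
  · rintro ⟨a, b, ⟨hadj, hind⟩, hS⟩
    have hpick : ∀ i : Fin n, ∃ s : V, s ∈ S ∧
        (a i = Sum.inl s ∨ b i = Sum.inl s) := by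
      intro i
      rcases hS i with h | h
      · rcases h with ⟨s, hs, heq⟩
        exact ⟨s, hs, Or.inl heq.symm⟩
      · rcases h with ⟨s, hs, heq⟩
        exact ⟨s, hs, Or.inr heq.symm⟩
    choose s hsS hsend using hpick
    have hend : ∀ i, Sum.inl (s i) ∈ ({a i, b i} : Set (V ⊕ V)) := by
      intro i
      rcases hsend i with h | h
      · exact Or.inl h.symm
      · exact Or.inr h.symm
    have hinj : Function.Injective s := by
      intro i j hij
      by_contra hne
      exact ((hind i j hne _ (hend i) _ (hend j)).1 (by rw [hij])).elim
    refine ⟨Set.range s, ?_, ?_, ?_⟩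
    · rintro x ⟨i, rfl⟩
      exact hsS i
    · rintro x ⟨i, rfl⟩ y ⟨j, rfl⟩ hxy hadj'
      have hij : i ≠ j := fun h => hxy (by rw [h])
      exact (hind i j hij _ (hend i) _ (hend j)).2
        ((pend_adj_inl_inl G _ _).mpr hadj')
    · rw [← Nat.card_coe_set_eq, Nat.card_range_of_injective hinj,
        Nat.card_eq_fintype_card, Fintype.card_fin]
end
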